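/- Let r, t, t′, s be reals with t ≥ r/2, t′ ≥ r/2 and s > max{t,t′} − r/2. Then there exists a constant C > 0, depending only on (r, t, t′, s), such that for every function b : ℕ×ℕ → ℝ satisfying 0 ≤ b(j,j′) ≤ 2^{(j+j′)r/2 − |j−j′| s} for all j, j′ ∈ ℕ, for every J ∈ ℕ, and for all square-summable sequences x, y : ℕ → [0,∞), one has Σ_{(j,j′) ∈ ℕ×ℕ, max(j,j′) > J} 2^{−j t′ − j′ t} b(j,j′) x_{j′} y_j ≤ C · 2^{−J(t+t′−r)} · (Σ_{j′ ≥ 0} x_{j′}²)^{1/2} (Σ_{j ≥ 0} y_j²)^{1/2}. Equivalently, the bi-infinite matrix with entries 2^{−j t′ − j′ t} b(j,j′) for max(j,j′) > J and 0 for max(j,j′) ≤ J defines a bounded operator on ℓ²(ℕ) of operator norm at most C · 2^{−J(t+t′−r)}. -/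

import Mathlib

open scoped BigOperators

/-- Cast of `Nat.dist` to `ℝ` is the absolute difference. -/
lemma natDist_cast_real (j j' : ℕ) : (Nat.dist j j' : ℝ) = |(j : ℝ) - (j' : ℝ)| := by
  rcases le_total j j' with h | h
  · rw [Nat.dist_eq_sub_of_le h, abs_sub_comm,
      abs_of_nonneg (sub_nonneg.2 ((Nat.cast_le (α := ℝ)).2 h))]
    push_cast [h]
    ring
  · rw [Nat.dist_eq_sub_of_le_right h,
      abs_of_nonneg (sub_nonneg.2 ((Nat.cast_le (α := ℝ)).2 h))]
    push_cast [h]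
    ring

lemma geom_dist_summable {c : ℝ} (hc0 : 0 < c) (hc1 : c < 1) (k : ℕ) :
    Summable (fun i : ℕ => c ^ Nat.dist i k) := by
  refine Summable.of_nonneg_of_le (fun i => by positivity) (fun i => ?_)
    ((summable_geometric_of_lt_one hc0.le hc1).mul_right ((c⁻¹) ^ k))
  have hik : i ≤ Nat.dist i k + k := by
    have : Nat.dist i k = i - k + (k - i) := rfl
    omega
  have h1 : c ^ (Nat.dist i k + k) ≤ c ^ i := pow_le_pow_of_le_one hc0.le hc1.le hik
  rw [pow_add] at h1
  have hck : 0 < c ^ k := pow_pos hc0 k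
  calc c ^ Nat.dist i k = c ^ Nat.dist i k * c ^ k * (c⁻¹) ^ k := by
        rw [mul_assoc, ← mul_pow, mul_inv_cancel₀ hc0.ne', one_pow, mul_one]
    _ ≤ c ^ i * (c⁻¹) ^ k := by
        have : (0:ℝ) ≤ (c⁻¹) ^ k := by positivity
        exact mul_le_mul_of_nonneg_right h1 this

lemma geom_dist_tsum_le {c : ℝ} (hc0 : 0 < c) (hc1 : c < 1) (k : ℕ) :
    ∑' i : ℕ, c ^ Nat.dist i k ≤ 2 / (1 - c) := by
  have hsum := geom_dist_summable hc0 hc1 k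
  have hsplit := Summable.sum_add_tsum_nat_add (f := fun i : ℕ => c ^ Nat.dist i k) k hsum
  have htail : (∑' i : ℕ, c ^ Nat.dist (i + k) k) = (1 - c)⁻¹ := by
    have : ∀ i : ℕ, Nat.dist (i + k) k = i := fun i => by
      have : Nat.dist (i + k) k = (i + k) - k + (k - (i + k)) := rfl
      omega
    simp only [this]
    exact tsum_geometric_of_lt_one hc0.le hc1
  have hrange : (∑ i ∈ Finset.range k, c ^ Nat.dist i k) ≤ (1 - c)⁻¹ := by
    have hre := Finset.sum_range_reflect (fun i : ℕ => c ^ Nat.dist i k) k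
    have hval : ∀ i ∈ Finset.range k, c ^ Nat.dist (k - 1 - i) k = c ^ (i + 1) := by
      intro i hi
      have hik : i < k := Finset.mem_range.1 hi
      have : Nat.dist (k - 1 - i) k = i + 1 := by
        have : Nat.dist (k - 1 - i) k = (k - 1 - i) - k + (k - (k - 1 - i)) := rfl
        omega
      rw [this]
    calc (∑ i ∈ Finset.range k, c ^ Nat.dist i k)
        = ∑ i ∈ Finset.range k, c ^ Nat.dist (k - 1 - i) k := hre.symm
      _ = ∑ i ∈ Finset.range k, c * c ^ i := by
          refine Finset.sum_congr rfl fun i hi => ?_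
          rw [hval i hi, pow_succ, mul_comm]
      _ = c * ∑ i ∈ Finset.range k, c ^ i := by rw [← Finset.mul_sum]
      _ ≤ 1 * ∑' i : ℕ, c ^ i := by
          refine mul_le_mul hc1.le ?_ (Finset.sum_nonneg fun i _ => by positivity) zero_le_one
          exact Summable.sum_le_tsum _ (fun i _ => by positivity)
            (summable_geometric_of_lt_one hc0.le hc1)
      _ = (1 - c)⁻¹ := by rw [one_mul, tsum_geometric_of_lt_one hc0.le hc1]
  have h1c : 0 < 1 - c := by linarith
  calc ∑' i : ℕ, c ^ Nat.dist i k
      = (∑ i ∈ Finset.range k, c ^ Nat.dist i k) + ∑' i : ℕ, c ^ Nat.dist (i + k) k :=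
        hsplit.symm
    _ ≤ (1 - c)⁻¹ + (1 - c)⁻¹ := by rw [htail]; exact add_le_add_left hrange _
    _ = 2 / (1 - c) := by field_simp; ring

/-- The kernel `(k,i) ↦ c^{dist i k} z k ^ 2` is summable on `ℕ × ℕ` with sum at most
`(2/(1-c)) ∑ z²`. -/
lemma kernel_summable_and_tsum_le {c : ℝ} (hc0 : 0 < c) (hc1 : c < 1) {z : ℕ → ℝ}
    (hz2 : Summable (fun n : ℕ => z n ^ 2)) :
    Summable (fun p : ℕ × ℕ => c ^ Nat.dist p.2 p.1 * z p.1 ^ 2) ∧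
    ∑' p : ℕ × ℕ, c ^ Nat.dist p.2 p.1 * z p.1 ^ 2 ≤ (2 / (1 - c)) * ∑' n : ℕ, z n ^ 2 := by
  have hM : 0 < 2 / (1 - c) := by
    have : 0 < 1 - c := by linarith
    positivity
  have hnn : 0 ≤ (fun p : ℕ × ℕ => c ^ Nat.dist p.2 p.1 * z p.1 ^ 2) := by
    intro p; positivity
  have hslice : ∀ k : ℕ, Summable (fun i : ℕ => c ^ Nat.dist i k * z k ^ 2) :=
    fun k => (geom_dist_summable hc0 hc1 k).mul_right _
  have hslicesum : ∀ k : ℕ, (∑' i : ℕ, c ^ Nat.dist i k * z k ^ 2)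
      ≤ (2 / (1 - c)) * z k ^ 2 := by
    intro k
    rw [tsum_mul_right]
    exact mul_le_mul_of_nonneg_right (geom_dist_tsum_le hc0 hc1 k) (sq_nonneg _)
  have houter : Summable (fun k : ℕ => ∑' i : ℕ, c ^ Nat.dist i k * z k ^ 2) := by
    refine Summable.of_nonneg_of_le (fun k => tsum_nonneg fun i => by positivity)
      (fun k => hslicesum k) (hz2.mul_left _)
  have hsum : Summable (fun p : ℕ × ℕ => c ^ Nat.dist p.2 p.1 * z p.1 ^ 2) := by
    rw [summable_prod_of_nonneg hnn]
    exact ⟨fun k => hslice k, houter⟩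
  refine ⟨hsum, ?_⟩
  calc ∑' p : ℕ × ℕ, c ^ Nat.dist p.2 p.1 * z p.1 ^ 2
      = ∑' k : ℕ, ∑' i : ℕ, c ^ Nat.dist i k * z k ^ 2 := Summable.tsum_prod' hsum hslice
    _ ≤ ∑' k : ℕ, (2 / (1 - c)) * z k ^ 2 :=
        Summable.tsum_le_tsum hslicesum houter (hz2.mul_left _)
    _ = (2 / (1 - c)) * ∑' n : ℕ, z n ^ 2 := tsum_mul_left

/-- The scale-block exponent estimate. -/
lemma exponent_le {r t t' s : ℝ} (ht : r / 2 ≤ t) (ht' : r / 2 ≤ t')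
    {J j j' : ℕ} (h : J < max j j') :
    -(j : ℝ) * t' - (j' : ℝ) * t + (((j : ℝ) + (j' : ℝ)) * r / 2 - |(j : ℝ) - (j' : ℝ)| * s)
      ≤ -(J : ℝ) * (t + t' - r) - (Nat.dist j j' : ℝ) * (s - (max t t' - r / 2)) := by
  rw [natDist_cast_real]
  rcases le_total j j' with hle | hle
  · have hJ : J < j' := lt_of_lt_of_le h (max_le hle le_rfl)
    have hJr : (J : ℝ) ≤ (j' : ℝ) := Nat.cast_le.2 hJ.le
    have hler : (j : ℝ) ≤ (j' : ℝ) := Nat.cast_le.2 hle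
    have habs : |(j : ℝ) - (j' : ℝ)| = (j' : ℝ) - (j : ℝ) := by
      rw [abs_of_nonpos (by linarith)]; ring
    rw [habs]
    have h1 : 0 ≤ ((j' : ℝ) - (j : ℝ)) * (max t t' - t') :=
      mul_nonneg (by linarith) (by linarith [le_max_right t t'])
    have h2 : 0 ≤ ((j' : ℝ) - (J : ℝ)) * (t + t' - r) :=
      mul_nonneg (by linarith) (by linarith)
    nlinarith [h1, h2]
  · have hJ : J < j := lt_of_lt_of_le h (by omega)
    have hJr : (J : ℝ) ≤ (j : ℝ) := Nat.cast_le.2 hJ.le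
    have hler : (j' : ℝ) ≤ (j : ℝ) := Nat.cast_le.2 hle
    have habs : |(j : ℝ) - (j' : ℝ)| = (j : ℝ) - (j' : ℝ) := abs_of_nonneg (by linarith)
    rw [habs]
    have h1 : 0 ≤ ((j : ℝ) - (j' : ℝ)) * (max t t' - t) :=
      mul_nonneg (by linarith) (by linarith [le_max_left t t'])
    have h2 : 0 ≤ ((j : ℝ) - (J : ℝ)) * (t + t' - r) :=
      mul_nonneg (by linarith) (by linarith)
    nlinarith [h1, h2]

/-- Abstract truncation error bound: for blocks with two-scale decay
`0 ≤ b(j,j') ≤ 2^{(j+j')r/2 − |j−j'|s}`, the weighted bilinear form over the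
index pairs outside the square `[0,J]²` is (summable and) bounded by
`C · 2^{−J(t+t'−r)} · ‖x‖_{ℓ²} ‖y‖_{ℓ²}`, i.e. the corresponding bi-infinite
matrix has `ℓ²(ℕ)` operator norm at most `C · 2^{−J(t+t'−r)}`. -/
theorem tail_operator_bound (r t t' s : ℝ)
    (ht : r / 2 ≤ t) (ht' : r / 2 ≤ t') (hs : s > max t t' - r / 2) :
    ∃ C : ℝ, 0 < C ∧
      ∀ b : ℕ × ℕ → ℝ,
        (∀ j j' : ℕ, 0 ≤ b (j, j') ∧
          b (j, j') ≤ (2 : ℝ) ^ (((j : ℝ) + (j' : ℝ)) * r / 2 - |(j : ℝ) - (j' : ℝ)| * s)) →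
        ∀ J : ℕ, ∀ x y : ℕ → ℝ,
          (∀ j, 0 ≤ x j) → (∀ j, 0 ≤ y j) →
          Summable (fun j : ℕ => x j ^ 2) → Summable (fun j : ℕ => y j ^ 2) →
          Summable (fun p : {p : ℕ × ℕ // J < max p.1 p.2} =>
            (2 : ℝ) ^ (-(p.1.1 : ℝ) * t' - (p.1.2 : ℝ) * t) * b p.1
              * x p.1.2 * y p.1.1) ∧
          ∑' p : {p : ℕ × ℕ // J < max p.1 p.2},
              (2 : ℝ) ^ (-(p.1.1 : ℝ) * t' - (p.1.2 : ℝ) * t) * b p.1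
                * x p.1.2 * y p.1.1
            ≤ C * (2 : ℝ) ^ (-(J : ℝ) * (t + t' - r))
                * Real.sqrt (∑' j : ℕ, x j ^ 2) * Real.sqrt (∑' j : ℕ, y j ^ 2) := by
  set δ : ℝ := s - (max t t' - r / 2) with hδdef
  have hδ : 0 < δ := by simp only [hδdef]; linarith [hs]
  set c : ℝ := (2 : ℝ) ^ (-δ) with hcdef
  have hc0 : 0 < c := Real.rpow_pos_of_pos two_pos _
  have hc1 : c < 1 := Real.rpow_lt_one_of_one_lt_of_neg one_lt_two (by linarith)
  have h1c : 0 < 1 - c := by linarith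
  refine ⟨2 / (1 - c), by positivity, ?_⟩
  intro b hb J x y hx hy hx2 hy2
  set T := {p : ℕ × ℕ // J < max p.1 p.2}
  set f : T → ℝ := fun p =>
    (2 : ℝ) ^ (-(p.1.1 : ℝ) * t' - (p.1.2 : ℝ) * t) * b p.1 * x p.1.2 * y p.1.1 with hfdef
  have hfnn : ∀ p : T, 0 ≤ f p := by
    intro p
    have hb0 : 0 ≤ b p.1 := by
      have := (hb p.1.1 p.1.2).1
      simpa using this
    have : (0:ℝ) ≤ (2 : ℝ) ^ (-(p.1.1 : ℝ) * t' - (p.1.2 : ℝ) * t) :=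
      (Real.rpow_pos_of_pos two_pos _).le
    exact mul_nonneg (mul_nonneg (mul_nonneg this hb0) (hx _)) (hy _)
  set A : ℝ := (2 : ℝ) ^ (-(J : ℝ) * (t + t' - r)) with hAdef
  have hA0 : 0 < A := Real.rpow_pos_of_pos two_pos _
  -- pointwise bound
  have key : ∀ p : T, f p ≤ A * (c ^ Nat.dist p.1.1 p.1.2 * x p.1.2 * y p.1.1) := by
    rintro ⟨⟨j, j'⟩, hp⟩
    simp only [hfdef]
    have hb2 := (hb j j').2
    have hb1 := (hb j j').1
    have step1 : (2 : ℝ) ^ (-(j : ℝ) * t' - (j' : ℝ) * t) * b (j, j')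
        ≤ (2 : ℝ) ^ (-(j : ℝ) * t' - (j' : ℝ) * t + (((j : ℝ) + (j' : ℝ)) * r / 2
            - |(j : ℝ) - (j' : ℝ)| * s)) := by
      rw [Real.rpow_add two_pos]
      exact mul_le_mul_of_nonneg_left hb2 (Real.rpow_pos_of_pos two_pos _).le
    have step2 : (2 : ℝ) ^ (-(j : ℝ) * t' - (j' : ℝ) * t + (((j : ℝ) + (j' : ℝ)) * r / 2
            - |(j : ℝ) - (j' : ℝ)| * s))
        ≤ A * c ^ Nat.dist j j' := by
      have hE := exponent_le (s := s) ht ht' hp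
      have step2a : (2 : ℝ) ^ (-(j : ℝ) * t' - (j' : ℝ) * t + (((j : ℝ) + (j' : ℝ)) * r / 2
            - |(j : ℝ) - (j' : ℝ)| * s))
          ≤ (2 : ℝ) ^ (-(J : ℝ) * (t + t' - r) - (Nat.dist j j' : ℝ) * δ) := by
        apply Real.rpow_le_rpow_of_exponent_le one_le_two
        rw [hδdef]
        exact hE
      have heq : (2 : ℝ) ^ (-(J : ℝ) * (t + t' - r) - (Nat.dist j j' : ℝ) * δ)
          = A * c ^ Nat.dist j j' := by
        rw [sub_eq_add_neg, Real.rpow_add two_pos, hAdef]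
        congr 1
        rw [hcdef]
        rw [← Real.rpow_natCast ((2:ℝ) ^ (-δ)) (Nat.dist j j'), ← Real.rpow_mul (by norm_num)]
        congr 1
        ring
      exact step2a.trans_eq heq
    calc (2 : ℝ) ^ (-(j : ℝ) * t' - (j' : ℝ) * t) * b (j, j') * x j' * y j
        ≤ (A * c ^ Nat.dist j j') * x j' * y j := by
          apply mul_le_mul_of_nonneg_right _ (hy j)
          apply mul_le_mul_of_nonneg_right _ (hx j')
          exact le_trans step1 step2
      _ = A * (c ^ Nat.dist j j' * x j' * y j) := by ring
  -- the two kernel sums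
  obtain ⟨hxker, hxker_le⟩ := kernel_summable_and_tsum_le hc0 hc1 hx2
  obtain ⟨hyker, hyker_le⟩ := kernel_summable_and_tsum_le hc0 hc1 hy2
  set X : ℝ := ∑' j : ℕ, x j ^ 2 with hXdef
  set Y : ℝ := ∑' j : ℕ, y j ^ 2 with hYdef
  have hX0 : 0 ≤ X := tsum_nonneg fun j => sq_nonneg _
  have hY0 : 0 ≤ Y := tsum_nonneg fun j => sq_nonneg _
  set e : ℝ := Real.sqrt c with hedef
  have hee : e * e = c := Real.mul_self_sqrt hc0.le
  -- finite-set bound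
  have hFin : ∀ F : Finset T,
      ∑ p ∈ F, f p ≤ 2 / (1 - c) * A * Real.sqrt X * Real.sqrt Y := by
    intro F
    have hCS : ∑ p ∈ F, (c ^ Nat.dist p.1.1 p.1.2 * x p.1.2 * y p.1.1)
        ≤ Real.sqrt (∑ p ∈ F, c ^ Nat.dist p.1.1 p.1.2 * x p.1.2 ^ 2)
          * Real.sqrt (∑ p ∈ F, c ^ Nat.dist p.1.1 p.1.2 * y p.1.1 ^ 2) := by
      have := Real.sum_mul_le_sqrt_mul_sqrt F
        (fun p : T => e ^ Nat.dist p.1.1 p.1.2 * x p.1.2)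
        (fun p : T => e ^ Nat.dist p.1.1 p.1.2 * y p.1.1)
      have heq1 : ∀ p : T, (e ^ Nat.dist p.1.1 p.1.2 * x p.1.2)
          * (e ^ Nat.dist p.1.1 p.1.2 * y p.1.1)
          = c ^ Nat.dist p.1.1 p.1.2 * x p.1.2 * y p.1.1 := by
        intro p
        rw [← hee, mul_pow]
        ring
      have heq2 : ∀ p : T, (e ^ Nat.dist p.1.1 p.1.2 * x p.1.2) ^ 2
          = c ^ Nat.dist p.1.1 p.1.2 * x p.1.2 ^ 2 := by
        intro p
        rw [mul_pow, ← pow_mul, mul_comm (Nat.dist p.1.1 p.1.2) 2, pow_mul, ← hee]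
        ring_nf
      have heq3 : ∀ p : T, (e ^ Nat.dist p.1.1 p.1.2 * y p.1.1) ^ 2
          = c ^ Nat.dist p.1.1 p.1.2 * y p.1.1 ^ 2 := by
        intro p
        rw [mul_pow, ← pow_mul, mul_comm (Nat.dist p.1.1 p.1.2) 2, pow_mul, ← hee]
        ring_nf
      simp only [heq1, heq2, heq3] at this
      exact this
    -- bound the two squared sums by the full kernel tsums
    have hxbound : ∑ p ∈ F, c ^ Nat.dist p.1.1 p.1.2 * x p.1.2 ^ 2 ≤ 2 / (1 - c) * X := by
      have hinj : Function.Injective (fun p : T => (p.1.2, p.1.1)) := by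
        intro p q h
        apply Subtype.ext
        have h1 := congrArg Prod.fst h
        have h2 := congrArg Prod.snd h
        exact Prod.ext h2 h1
      calc ∑ p ∈ F, c ^ Nat.dist p.1.1 p.1.2 * x p.1.2 ^ 2
          = ∑ q ∈ F.image (fun p : T => (p.1.2, p.1.1)),
              c ^ Nat.dist q.2 q.1 * x q.1 ^ 2 := by
            rw [Finset.sum_image (fun p _ q _ h => hinj h)]
        _ ≤ ∑' q : ℕ × ℕ, c ^ Nat.dist q.2 q.1 * x q.1 ^ 2 :=
            Summable.sum_le_tsum _ (fun q _ => by positivity) hxker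
        _ ≤ 2 / (1 - c) * X := hxker_le
    have hybound : ∑ p ∈ F, c ^ Nat.dist p.1.1 p.1.2 * y p.1.1 ^ 2 ≤ 2 / (1 - c) * Y := by
      have hinj : Function.Injective (fun p : T => (p.1.1, p.1.2)) := by
        intro p q h
        apply Subtype.ext
        have h1 := congrArg Prod.fst h
        have h2 := congrArg Prod.snd h
        exact Prod.ext h1 h2
      calc ∑ p ∈ F, c ^ Nat.dist p.1.1 p.1.2 * y p.1.1 ^ 2
          = ∑ q ∈ F.image (fun p : T => (p.1.1, p.1.2)),
              c ^ Nat.dist q.2 q.1 * y q.1 ^ 2 := by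
            rw [Finset.sum_image (fun p _ q _ h => hinj h)]
            refine Finset.sum_congr rfl fun p _ => ?_
            rw [Nat.dist_comm]
        _ ≤ ∑' q : ℕ × ℕ, c ^ Nat.dist q.2 q.1 * y q.1 ^ 2 :=
            Summable.sum_le_tsum _ (fun q _ => by positivity) hyker
        _ ≤ 2 / (1 - c) * Y := hyker_le
    have hM0 : (0:ℝ) ≤ 2 / (1 - c) := by positivity
    calc ∑ p ∈ F, f p
        ≤ ∑ p ∈ F, A * (c ^ Nat.dist p.1.1 p.1.2 * x p.1.2 * y p.1.1) :=
          Finset.sum_le_sum fun p _ => key p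
      _ = A * ∑ p ∈ F, (c ^ Nat.dist p.1.1 p.1.2 * x p.1.2 * y p.1.1) := by
          rw [Finset.mul_sum]
      _ ≤ A * (Real.sqrt (2 / (1 - c) * X) * Real.sqrt (2 / (1 - c) * Y)) := by
          apply mul_le_mul_of_nonneg_left _ hA0.le
          refine le_trans hCS ?_
          apply mul_le_mul (Real.sqrt_le_sqrt hxbound) (Real.sqrt_le_sqrt hybound)
            (Real.sqrt_nonneg _) (Real.sqrt_nonneg _)
      _ = 2 / (1 - c) * A * Real.sqrt X * Real.sqrt Y := by
          rw [Real.sqrt_mul hM0, Real.sqrt_mul hM0]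
          rw [show Real.sqrt (2 / (1-c)) * Real.sqrt X * (Real.sqrt (2 / (1-c)) * Real.sqrt Y)
              = (Real.sqrt (2 / (1-c)) * Real.sqrt (2 / (1-c))) * (Real.sqrt X * Real.sqrt Y)
              from by ring, Real.mul_self_sqrt hM0]
          ring
  have hsum : Summable f := summable_of_sum_le hfnn hFin
  exact ⟨hsum, Summable.tsum_le_of_sum_le hsum hFin⟩
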